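/- Let Φ be a Schwartz function on R^{2n}, k ∈ Z, Φ_k(y) := 2^{2kn} Φ(2^k y), Q a cube in R^n with center c_Q and side length ℓ(Q), L > n, and 0 < δ < 1. Define V^L_k(x,y1,c_Q) := ∫_0^1 2^{kn}(1 + 2^k|x − t y1 − (1−t)c_Q|)^{−L} dt, W^L_k(x,y1,c_Q) := 2^{kn}(1 + 2^k|x − y1|)^{−L} + 2^{kn}(1 + 2^k|x − c_Q|)^{−L}, and U^{L,δ}_k := (V^L_k)^δ (W^L_k)^{1−δ}. Then for all γ, μ ∈ Z with μ ≥ 0, y1 ∈ Q, and x, z1, y2, z2 ∈ R^n: |Φ_{μ+γ}(x − y1 − z1, x − y2 − z2) − Φ_{μ+γ}(x − c_Q − z1, x − y2 − z2)| ≲_{L,δ} 2^{δμ} (2^γ ℓ(Q))^δ U^{L,δ}_{μ+γ}(x − z1, y1, c_Q) · 2^{(μ+γ)n}(1 + 2^{μ+γ}|x − y2 − z2|)^{−L}; moreover ‖U^{L,δ}_{μ+γ}(·, y1, c_Q)‖_{L^1(R^n)} ≲ 1. -/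

import Mathlib

/-!
Put `p(t) = 2^k (a - t y₁ - (1 - t) c, b)`. Then `Φ_k(a - y₁, b) - Φ_k(a - c, b)` is
`2^{2kn}` times the integral of `DΦ(p(t)) p'(t)` over `[0, 1]`, and `|p'| = 2^k |y₁ - c|`; the
Schwartz decay of `DΦ` in each of the two variables separately bounds the difference by
`2^k |y₁ - c| V_k(a) w_k(b)`, where `w_k(b) = 2^{kn}(1 + 2^k|b|)^{-L}` is `decayWeight`, while
the decay of `Φ` bounds it by `W_k(a) w_k(b)`. The geometric mean of the two bounds is the `U`-estimate, and
`|y₁ - c| ≤ √n ℓ(Q)` on the cube.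

For the `L¹` bound, every translate of `w_k` has integral `∫ (1 + |u|)^{-L} < ∞` (as `L > n`),
so by Fubini so do `V_k` and each term of `W_k`; and `U ≤ δ V + (1 - δ) W` by weighted AM-GM.
-/

open MeasureTheory Filter
open scoped ENNReal Topology

noncomputable section

/-- `ℝⁿ` as a Euclidean space. -/
abbrev ESp (n : ℕ) := EuclideanSpace ℝ (Fin n)

/-- `ℝⁿ × ℝⁿ`, representing `ℝ^{2n}`. -/
abbrev PSp (n : ℕ) := ESp n × ESp n

/-- The (closed) cube in `ℝⁿ` with center `c` and side length `ℓ`. -/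
def cube (n : ℕ) (c : ESp n) (ℓ : ℝ) : Set (ESp n) := {x | ∀ i, |x i - c i| ≤ ℓ / 2}

/-- The `L¹`-dilation `Φ_k(y) = 2^{2kn} Φ(2^k y)` of a function on `ℝ^{2n}`. -/
def dilR {n : ℕ} (Φ : PSp n → ℝ) (k : ℤ) (y : PSp n) : ℝ :=
  ((2:ℝ) ^ k) ^ (2 * n) * Φ ((2:ℝ) ^ k • y)

/-- `V^L_k(x, y₁, c_Q) = ∫₀¹ 2^{kn} (1 + 2^k|x - t y₁ - (1-t) c_Q|)^{-L} dt`. -/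
def Vk {n : ℕ} (L : ℝ) (k : ℤ) (x y1 c : ESp n) : ℝ :=
  ∫ t in Set.Icc (0:ℝ) 1,
    ((2:ℝ) ^ k) ^ n * (1 + (2:ℝ) ^ k * ‖x - t • y1 - (1 - t) • c‖) ^ (-L)

/-- `W^L_k(x, y₁, c_Q) = 2^{kn}(1 + 2^k|x-y₁|)^{-L} + 2^{kn}(1 + 2^k|x-c_Q|)^{-L}`. -/
def Wk {n : ℕ} (L : ℝ) (k : ℤ) (x y1 c : ESp n) : ℝ :=
  ((2:ℝ) ^ k) ^ n * (1 + (2:ℝ) ^ k * ‖x - y1‖) ^ (-L) +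
    ((2:ℝ) ^ k) ^ n * (1 + (2:ℝ) ^ k * ‖x - c‖) ^ (-L)

/-- `U^{L,δ}_k = (V^L_k)^δ (W^L_k)^{1-δ}`. -/
def Uk {n : ℕ} (L δ : ℝ) (k : ℤ) (x y1 c : ESp n) : ℝ :=
  Vk L k x y1 c ^ δ * Wk L k x y1 c ^ (1 - δ)

def decayWeight {n : ℕ} (L : ℝ) (k : ℤ) (u : ESp n) : ℝ :=
  ((2:ℝ) ^ k) ^ n * (1 + (2:ℝ) ^ k * ‖u‖) ^ (-L)

section Weights

variable {n : ℕ} {L : ℝ} {k : ℤ}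

lemma decayWeight_nonneg (u : ESp n) : 0 ≤ decayWeight L k u := by
  unfold decayWeight; positivity

@[fun_prop]
lemma continuous_decayWeight : Continuous (decayWeight (n := n) L k) := by
  unfold decayWeight
  exact continuous_const.mul <|
    (continuous_const.add (continuous_const.mul continuous_norm)).rpow_const fun u =>
      Or.inl (by positivity : (0:ℝ) < 1 + 2 ^ k * ‖u‖).ne'

lemma decayWeight_eq_smul (u : ESp n) :
    decayWeight L k u = ((2:ℝ) ^ k) ^ n * (1 + ‖(2:ℝ) ^ k • u‖) ^ (-L) := by
  rw [decayWeight, norm_smul, Real.norm_of_nonneg (by positivity)]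

lemma Vk_eq_integral_decayWeight (x y1 c : ESp n) :
    Vk L k x y1 c = ∫ t in Set.Icc (0:ℝ) 1, decayWeight L k (x - t • y1 - (1 - t) • c) := rfl

lemma Wk_eq_decayWeight_add (x y1 c : ESp n) :
    Wk L k x y1 c = decayWeight L k (x - y1) + decayWeight L k (x - c) := rfl

lemma Vk_nonneg (x y1 c : ESp n) : 0 ≤ Vk L k x y1 c :=
  integral_nonneg fun _ => decayWeight_nonneg _

lemma Wk_nonneg (x y1 c : ESp n) : 0 ≤ Wk L k x y1 c :=
  add_nonneg (decayWeight_nonneg _) (decayWeight_nonneg _)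

lemma Uk_nonneg (δ : ℝ) (x y1 c : ESp n) : 0 ≤ Uk L δ k x y1 c := by
  unfold Uk
  have := Vk_nonneg (L := L) (k := k) x y1 c
  have := Wk_nonneg (L := L) (k := k) x y1 c
  positivity

lemma integrable_decayWeight_sub (hL : (n : ℝ) < L) (a : ESp n) :
    Integrable fun x => decayWeight L k (x - a) := by
  have hfr : (Module.finrank ℝ (ESp n) : ℝ) < L := by rwa [finrank_euclideanSpace_fin]
  simp_rw [decayWeight_eq_smul]
  exact (((integrable_one_add_norm hfr).comp_smul (by positivity)).comp_sub_right a).const_mul _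

lemma integral_decayWeight_sub (a : ESp n) :
    ∫ x, decayWeight L k (x - a) = ∫ u : ESp n, (1 + ‖u‖) ^ (-L) := by
  simp_rw [decayWeight_eq_smul]
  rw [integral_const_mul, integral_sub_right_eq_self (fun x => (1 + ‖(2:ℝ) ^ k • x‖) ^ (-L)) a,
    Measure.integral_comp_smul volume (fun u : ESp n => (1 + ‖u‖) ^ (-L)),
    finrank_euclideanSpace_fin, smul_eq_mul, abs_inv,
    abs_of_pos (by positivity), ← mul_assoc, mul_inv_cancel₀ (by positivity), one_mul]

lemma integrable_Wk (hL : (n : ℝ) < L) (y1 c : ESp n) :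
    Integrable fun x => Wk L k x y1 c :=
  (integrable_decayWeight_sub hL y1).add (integrable_decayWeight_sub hL c)

lemma integral_Wk (hL : (n : ℝ) < L) (y1 c : ESp n) :
    ∫ x, Wk L k x y1 c = 2 * ∫ u : ESp n, (1 + ‖u‖) ^ (-L) := by
  simp_rw [Wk_eq_decayWeight_add]
  rw [integral_add (integrable_decayWeight_sub hL y1) (integrable_decayWeight_sub hL c),
    integral_decayWeight_sub, integral_decayWeight_sub, two_mul]

lemma integrable_decayWeight_segment (hL : (n : ℝ) < L) (y1 c : ESp n) :
    Integrable (fun p : ESp n × ℝ => decayWeight L k (p.1 - p.2 • y1 - (1 - p.2) • c))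
      (volume.prod (volume.restrict (Set.Icc (0:ℝ) 1))) := by
  have hshift (x : ESp n) (t : ℝ) :
      x - t • y1 - (1 - t) • c = x - (t • y1 + (1 - t) • c) := sub_sub _ _ _
  refine (integrable_prod_iff' (by fun_prop : Continuous _).aestronglyMeasurable).2
    ⟨ae_of_all _ fun t => ?_, ?_⟩
  · simpa only [hshift] using integrable_decayWeight_sub hL (t • y1 + (1 - t) • c)
  · simp_rw [Real.norm_of_nonneg (decayWeight_nonneg _), hshift, integral_decayWeight_sub]
    exact integrable_const _

lemma integrable_Vk (hL : (n : ℝ) < L) (y1 c : ESp n) :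
    Integrable fun x => Vk L k x y1 c :=
  (integrable_decayWeight_segment hL y1 c).integral_prod_left

lemma integral_Vk (hL : (n : ℝ) < L) (y1 c : ESp n) :
    ∫ x, Vk L k x y1 c = ∫ u : ESp n, (1 + ‖u‖) ^ (-L) := by
  simp_rw [Vk_eq_integral_decayWeight]
  rw [integral_integral_swap (integrable_decayWeight_segment hL y1 c)]
  simp_rw [sub_sub _ (_ • y1), integral_decayWeight_sub]
  simp

lemma integral_Uk_le (hL : (n : ℝ) < L) {δ : ℝ} (hδ0 : 0 ≤ δ) (hδ1 : δ ≤ 1) (y1 c : ESp n) :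
    ∫ x, Uk L δ k x y1 c ≤ 2 * ∫ u : ESp n, (1 + ‖u‖) ^ (-L) := by
  have hI : 0 ≤ ∫ u : ESp n, (1 + ‖u‖) ^ (-L) := integral_nonneg fun _ => by positivity
  have hAMGM (x : ESp n) : Uk L δ k x y1 c ≤ δ * Vk L k x y1 c + (1 - δ) * Wk L k x y1 c :=
    Real.geom_mean_le_arith_mean2_weighted hδ0 (by linarith) (Vk_nonneg x y1 c)
      (Wk_nonneg x y1 c) (by ring)
  have hV := (integrable_Vk (k := k) hL y1 c).const_mul δ
  have hW := (integrable_Wk (k := k) hL y1 c).const_mul (1 - δ)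
  calc ∫ x, Uk L δ k x y1 c
      ≤ ∫ x, (δ * Vk L k x y1 c + (1 - δ) * Wk L k x y1 c) :=
        integral_mono_of_nonneg (ae_of_all _ fun x => Uk_nonneg δ x y1 c) (hV.add hW)
          (ae_of_all _ hAMGM)
    _ = δ * (∫ u : ESp n, (1 + ‖u‖) ^ (-L)) + (1 - δ) * (2 * ∫ u : ESp n, (1 + ‖u‖) ^ (-L)) := by
        rw [integral_add hV hW, integral_const_mul, integral_const_mul,
          integral_Vk hL, integral_Wk hL]
    _ ≤ 2 * ∫ u : ESp n, (1 + ‖u‖) ^ (-L) := by nlinarith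

end Weights

lemma SchwartzMap.exists_norm_iteratedFDeriv_le_prod {E F V : Type*} [NormedAddCommGroup E]
    [NormedSpace ℝ E] [NormedAddCommGroup F] [NormedSpace ℝ F] [NormedAddCommGroup V]
    [NormedSpace ℝ V] (Φ : SchwartzMap (E × F) V) (L : ℝ) (i : ℕ) :
    ∃ C, 0 ≤ C ∧ ∀ w : E × F,
      ‖iteratedFDeriv ℝ i Φ w‖ ≤ C * ((1 + ‖w.1‖) ^ (-L) * (1 + ‖w.2‖) ^ (-L)) := by
  set m := ⌈L⌉₊
  refine ⟨2 ^ (2 * m) * (Finset.Iic (2 * m, i)).sup (fun p => SchwartzMap.seminorm ℝ p.1 p.2) Φ,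
    by positivity, fun w => ?_⟩
  have hdecay := SchwartzMap.one_add_le_sup_seminorm_apply (𝕜 := ℝ) (m := (2 * m, i))
    le_rfl le_rfl Φ w
  have hcoord {r : ℝ} (hr : 0 ≤ r) (hrw : r ≤ ‖w‖) : (1 + r) ^ L ≤ (1 + ‖w‖) ^ m :=
    calc (1 + r) ^ L ≤ (1 + r) ^ (m : ℝ) :=
          Real.rpow_le_rpow_of_exponent_le (by linarith) (Nat.le_ceil L)
      _ ≤ (1 + ‖w‖) ^ m := by rw [Real.rpow_natCast]; gcongr
  rw [Real.rpow_neg (by positivity), Real.rpow_neg (by positivity), ← mul_inv, ← div_eq_mul_inv,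
    le_div_iff₀ (by positivity)]
  calc ‖iteratedFDeriv ℝ i Φ w‖ * ((1 + ‖w.1‖) ^ L * (1 + ‖w.2‖) ^ L)
      ≤ ‖iteratedFDeriv ℝ i Φ w‖ * ((1 + ‖w‖) ^ m * (1 + ‖w‖) ^ m) := by
        gcongr
        exacts [hcoord (norm_nonneg _) (norm_fst_le w), hcoord (norm_nonneg _) (norm_snd_le w)]
    _ = (1 + ‖w‖) ^ (2 * m) * ‖iteratedFDeriv ℝ i Φ w‖ := by ring
    _ ≤ _ := hdecay

lemma norm_sub_le_integral_norm_fderiv {E F : Type*} [NormedAddCommGroup E] [NormedSpace ℝ E]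
    [NormedAddCommGroup F] [NormedSpace ℝ F] [CompleteSpace F] {f : E → F}
    (hf : ContDiff ℝ 1 f) (x v : E) :
    ‖f (x + v) - f x‖ ≤ ∫ t in Set.Icc (0:ℝ) 1, ‖fderiv ℝ f (x + t • v)‖ * ‖v‖ := by
  have hderiv (t : ℝ) : HasDerivAt (fun t : ℝ => f (x + t • v)) (fderiv ℝ f (x + t • v) v) t := by
    have hline : HasDerivAt (fun t : ℝ => x + t • v) v t := by
      simpa using ((hasDerivAt_id t).smul_const v).const_add x
    exact ((hf.differentiable one_ne_zero) _).hasFDerivAt.comp_hasDerivAt t hline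
  have hcont : Continuous fun t : ℝ => fderiv ℝ f (x + t • v) :=
    (hf.continuous_fderiv one_ne_zero).comp (by fun_prop)
  have hftc : f (x + v) - f x = ∫ t in (0:ℝ)..1, fderiv ℝ f (x + t • v) v := by
    rw [intervalIntegral.integral_eq_sub_of_hasDerivAt (fun t _ => hderiv t)
      ((hcont.clm_apply continuous_const).intervalIntegrable 0 1)]
    simp
  rw [hftc, intervalIntegral.integral_of_le zero_le_one, ← integral_Icc_eq_integral_Ioc]
  exact norm_integral_le_of_norm_le ((hcont.norm.mul continuous_const).integrableOn_Icc)
    (ae_of_all _ fun t => (fderiv ℝ f (x + t • v)).le_opNorm v)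

lemma le_rpow_mul_rpow_of_le_of_le {x A B δ : ℝ} (hx : 0 ≤ x) (hδ0 : 0 ≤ δ) (hδ1 : δ ≤ 1)
    (hA : x ≤ A) (hB : x ≤ B) : x ≤ A ^ δ * B ^ (1 - δ) :=
  calc x = x ^ δ * x ^ (1 - δ) := by rw [← Real.rpow_add' hx (by norm_num), add_sub_cancel,
        Real.rpow_one]
    _ ≤ A ^ δ * B ^ (1 - δ) := by
        gcongr
        exact Real.rpow_nonneg (hx.trans hA) _

lemma norm_sub_le_of_mem_cube {n : ℕ} {c y : ESp n} {ℓ : ℝ} (hℓ : 0 ≤ ℓ) (hy : y ∈ cube n c ℓ) :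
    ‖y - c‖ ≤ √n * ℓ := by
  have hcoord (i : Fin n) : ‖(y - c) i‖ ≤ ℓ := by
    have := hy i
    rw [PiLp.sub_apply, Real.norm_eq_abs]
    linarith [half_le_self hℓ]
  calc ‖y - c‖ = √(∑ i, ‖(y - c) i‖ ^ 2) := EuclideanSpace.norm_eq _
    _ ≤ √(∑ _i : Fin n, ℓ ^ 2) := by gcongr with i; exact hcoord i
    _ = √n * ℓ := by simp [Real.sqrt_mul, Real.sqrt_sq hℓ]

lemma rpow_zpow_mul_norm_sub_le {n : ℕ} {c y : ESp n} {ℓ δ : ℝ} {μ γ : ℤ} (hδ : 0 ≤ δ)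
    (hℓ : 0 ≤ ℓ) (hy : y ∈ cube n c ℓ) :
    ((2:ℝ) ^ (μ + γ) * ‖y - c‖) ^ δ ≤ √n ^ δ * ((2:ℝ) ^ μ) ^ δ * ((2:ℝ) ^ γ * ℓ) ^ δ := by
  rw [← Real.mul_rpow (by positivity) (by positivity),
    ← Real.mul_rpow (by positivity) (by positivity)]
  refine Real.rpow_le_rpow (by positivity) ?_ hδ
  calc (2:ℝ) ^ (μ + γ) * ‖y - c‖ ≤ (2:ℝ) ^ (μ + γ) * (√n * ℓ) := by
        gcongr; exact norm_sub_le_of_mem_cube hℓ hy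
    _ = √n * (2:ℝ) ^ μ * ((2:ℝ) ^ γ * ℓ) := by rw [zpow_add₀ two_ne_zero]; ring

section DilationDifference

variable {n : ℕ} {L : ℝ}

lemma pow_mul_norm_comp_smul_le {V : Type*} [SeminormedAddCommGroup V] {F : PSp n → V} {C : ℝ}
    (hF : ∀ w : PSp n, ‖F w‖ ≤ C * ((1 + ‖w.1‖) ^ (-L) * (1 + ‖w.2‖) ^ (-L)))
    (k : ℤ) (u b : ESp n) :
    ((2:ℝ) ^ k) ^ (2 * n) * ‖F ((2:ℝ) ^ k • (u, b))‖ ≤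
      C * (decayWeight L k u * decayWeight L k b) :=
  calc ((2:ℝ) ^ k) ^ (2 * n) * ‖F ((2:ℝ) ^ k • (u, b))‖
      ≤ ((2:ℝ) ^ k) ^ (2 * n) *
          (C * ((1 + ‖(2:ℝ) ^ k • u‖) ^ (-L) * (1 + ‖(2:ℝ) ^ k • b‖) ^ (-L))) := by
        gcongr; exact hF _
    _ = C * (decayWeight L k u * decayWeight L k b) := by
        rw [decayWeight_eq_smul, decayWeight_eq_smul]; ring

lemma abs_dilR_sub_le_Wk {Φ : PSp n → ℝ} {C₀ : ℝ}
    (h0 : ∀ w : PSp n, ‖Φ w‖ ≤ C₀ * ((1 + ‖w.1‖) ^ (-L) * (1 + ‖w.2‖) ^ (-L)))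
    (k : ℤ) (y1 c a b : ESp n) :
    |dilR Φ k (a - y1, b) - dilR Φ k (a - c, b)| ≤ C₀ * Wk L k a y1 c * decayWeight L k b := by
  have habs (u : ESp n) : |dilR Φ k (u, b)| ≤ C₀ * (decayWeight L k u * decayWeight L k b) := by
    rw [dilR, abs_mul, abs_of_pos (by positivity), ← Real.norm_eq_abs]
    exact pow_mul_norm_comp_smul_le h0 k u b
  calc |dilR Φ k (a - y1, b) - dilR Φ k (a - c, b)|
      ≤ |dilR Φ k (a - y1, b)| + |dilR Φ k (a - c, b)| := abs_sub _ _
    _ ≤ _ := add_le_add (habs _) (habs _)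
    _ = C₀ * Wk L k a y1 c * decayWeight L k b := by rw [Wk_eq_decayWeight_add]; ring

lemma abs_dilR_sub_le_Vk (Φ : SchwartzMap (PSp n) ℝ) {C₁ : ℝ}
    (h1 : ∀ w : PSp n, ‖fderiv ℝ Φ w‖ ≤ C₁ * ((1 + ‖w.1‖) ^ (-L) * (1 + ‖w.2‖) ^ (-L)))
    (k : ℤ) (y1 c a b : ESp n) :
    |dilR Φ k (a - y1, b) - dilR Φ k (a - c, b)| ≤
      C₁ * ((2:ℝ) ^ k * ‖y1 - c‖) * Vk L k a y1 c * decayWeight L k b := by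
  set s : ℝ := (2:ℝ) ^ k
  have hs : 0 < s := zpow_pos two_pos k
  have he : 0 ≤ s * ‖y1 - c‖ := mul_nonneg hs.le (norm_nonneg _)
  set v : PSp n := (s • (c - y1), 0)
  have hpath (t : ℝ) : s • (a - c, b) + t • v = s • (a - t • y1 - (1 - t) • c, b) :=
    Prod.ext (by simp only [v, Prod.fst_add, Prod.smul_fst]; module) (by simp [v])
  have hv : ‖v‖ = s * ‖y1 - c‖ := by
    simp [v, Prod.norm_def, norm_smul, Real.norm_of_nonneg hs.le, norm_sub_rev, he]
  have hend : s • (a - c, b) + v = s • (a - y1, b) := by simpa using hpath 1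
  have hbound (t : ℝ) : s ^ (2 * n) * (‖fderiv ℝ Φ (s • (a - c, b) + t • v)‖ * ‖v‖) ≤
      C₁ * (s * ‖y1 - c‖) * decayWeight L k (a - t • y1 - (1 - t) • c) * decayWeight L k b := by
    have := pow_mul_norm_comp_smul_le h1 k (a - t • y1 - (1 - t) • c) b
    rw [hpath, hv]
    calc _ = s ^ (2 * n) * ‖fderiv ℝ Φ (s • (a - t • y1 - (1 - t) • c, b))‖ * (s * ‖y1 - c‖) := by
          ring
      _ ≤ C₁ * (decayWeight L k (a - t • y1 - (1 - t) • c) * decayWeight L k b) *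
            (s * ‖y1 - c‖) := by gcongr
      _ = _ := by ring
  have hcont : Continuous fun t : ℝ =>
      C₁ * (s * ‖y1 - c‖) * decayWeight L k (a - t • y1 - (1 - t) • c) * decayWeight L k b := by
    fun_prop
  calc |dilR Φ k (a - y1, b) - dilR Φ k (a - c, b)|
      = s ^ (2 * n) * ‖Φ (s • (a - c, b) + v) - Φ (s • (a - c, b))‖ := by
        rw [hend, dilR, dilR, ← mul_sub, abs_mul, abs_of_pos (by positivity), Real.norm_eq_abs]
    _ ≤ s ^ (2 * n) * ∫ t in Set.Icc (0:ℝ) 1, ‖fderiv ℝ Φ (s • (a - c, b) + t • v)‖ * ‖v‖ := by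
        gcongr; exact norm_sub_le_integral_norm_fderiv (Φ.smooth 1) _ _
    _ ≤ ∫ t in Set.Icc (0:ℝ) 1,
          C₁ * (s * ‖y1 - c‖) * decayWeight L k (a - t • y1 - (1 - t) • c) * decayWeight L k b := by
        rw [← integral_const_mul]
        exact integral_mono_of_nonneg (ae_of_all _ fun t => by positivity) hcont.integrableOn_Icc
          (ae_of_all _ hbound)
    _ = C₁ * (s * ‖y1 - c‖) * Vk L k a y1 c * decayWeight L k b := by
        rw [integral_mul_const, integral_const_mul, Vk_eq_integral_decayWeight]

lemma exists_abs_dilR_sub_le_Uk (Φ : SchwartzMap (PSp n) ℝ) (L : ℝ) {δ : ℝ} (hδ0 : 0 ≤ δ)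
    (hδ1 : δ ≤ 1) :
    ∃ C, 0 ≤ C ∧ ∀ (k : ℤ) (y1 c a b : ESp n),
      |dilR Φ k (a - y1, b) - dilR Φ k (a - c, b)| ≤
        C * ((2:ℝ) ^ k * ‖y1 - c‖) ^ δ * Uk L δ k a y1 c * decayWeight L k b := by
  obtain ⟨C₀, hC₀, h0⟩ := Φ.exists_norm_iteratedFDeriv_le_prod L 0
  obtain ⟨C₁, hC₁, h1⟩ := Φ.exists_norm_iteratedFDeriv_le_prod L 1
  simp only [norm_iteratedFDeriv_zero] at h0
  simp only [← norm_iteratedFDeriv_fderiv, norm_iteratedFDeriv_zero] at h1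
  refine ⟨C₁ ^ δ * C₀ ^ (1 - δ), by positivity, fun k y1 c a b => ?_⟩
  have hV := abs_dilR_sub_le_Vk Φ h1 k y1 c a b
  have hW := abs_dilR_sub_le_Wk h0 k y1 c a b
  have he : 0 ≤ (2:ℝ) ^ k * ‖y1 - c‖ := by positivity
  have hb := decayWeight_nonneg (L := L) (k := k) b
  have hVk := Vk_nonneg (L := L) (k := k) a y1 c
  have hWk := Wk_nonneg (L := L) (k := k) a y1 c
  have hb' : decayWeight L k b ^ δ * decayWeight L k b ^ (1 - δ) = decayWeight L k b := by
    rw [← Real.rpow_add' hb (by norm_num), add_sub_cancel, Real.rpow_one]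
  refine (le_rpow_mul_rpow_of_le_of_le (abs_nonneg _) hδ0 hδ1 hV hW).trans_eq ?_
  rw [Real.mul_rpow (by positivity) hb, Real.mul_rpow (by positivity) hVk, Real.mul_rpow hC₁ he,
    Real.mul_rpow (by positivity) hb, Real.mul_rpow hC₀ hWk, Uk]
  conv_rhs => rw [← hb']
  ring

end DilationDifference

theorem stmt18_general (n : ℕ) (Φ : SchwartzMap (PSp n) ℝ)
    (L : ℝ) (hL : (n : ℝ) < L) (δ : ℝ) (hδ0 : 0 < δ) (hδ1 : δ < 1) :
    ∃ C : ℝ, 0 < C ∧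
      (∀ (γ μ : ℤ), 0 ≤ μ → ∀ (c : ESp n) (ℓ : ℝ), 0 < ℓ → ∀ y1 ∈ cube n c ℓ,
        ∀ x z1 y2 z2 : ESp n,
          |dilR (⇑Φ) (μ + γ) (x - y1 - z1, x - y2 - z2) -
              dilR (⇑Φ) (μ + γ) (x - c - z1, x - y2 - z2)| ≤
            C * ((2:ℝ) ^ μ) ^ δ * ((2:ℝ) ^ γ * ℓ) ^ δ * Uk L δ (μ + γ) (x - z1) y1 c *
              (((2:ℝ) ^ (μ + γ)) ^ n *
                (1 + (2:ℝ) ^ (μ + γ) * ‖x - y2 - z2‖) ^ (-L))) ∧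
      (∀ (k : ℤ) (y1 c : ESp n), (∫ x : ESp n, Uk L δ k x y1 c) ≤ C) := by
  obtain ⟨C, hC, hdiff⟩ := exists_abs_dilR_sub_le_Uk Φ L hδ0.le hδ1.le
  set I := ∫ u : ESp n, (1 + ‖u‖) ^ (-L)
  have hI : 0 ≤ I := integral_nonneg fun _ => by positivity
  have hmax := le_max_right (C * √n ^ δ) (2 * I)
  refine ⟨max (C * √n ^ δ) (2 * I) + 1, by positivity, ?_,
    fun k y1 c => (integral_Uk_le hL hδ0.le hδ1.le y1 c).trans (by linarith)⟩
  intro γ μ _ c ℓ hℓ y1 hy1 x z1 y2 z2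
  have hU := Uk_nonneg (L := L) (k := μ + γ) δ (x - z1) y1 c
  have hb := decayWeight_nonneg (L := L) (k := μ + γ) (x - y2 - z2)
  calc _ ≤ C * ((2:ℝ) ^ (μ + γ) * ‖y1 - c‖) ^ δ * Uk L δ (μ + γ) (x - z1) y1 c *
        decayWeight L (μ + γ) (x - y2 - z2) := by
        simpa only [sub_right_comm x _ z1] using hdiff (μ + γ) y1 c (x - z1) (x - y2 - z2)
    _ ≤ C * (√n ^ δ * ((2:ℝ) ^ μ) ^ δ * ((2:ℝ) ^ γ * ℓ) ^ δ) * Uk L δ (μ + γ) (x - z1) y1 c *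
        decayWeight L (μ + γ) (x - y2 - z2) := by
        gcongr
        exact rpow_zpow_mul_norm_sub_le hδ0.le hℓ.le hy1
    _ = C * √n ^ δ * ((2:ℝ) ^ μ) ^ δ * ((2:ℝ) ^ γ * ℓ) ^ δ * Uk L δ (μ + γ) (x - z1) y1 c *
        decayWeight L (μ + γ) (x - y2 - z2) := by ring
    _ ≤ (max (C * √n ^ δ) (2 * I) + 1) * ((2:ℝ) ^ μ) ^ δ * ((2:ℝ) ^ γ * ℓ) ^ δ *
        Uk L δ (μ + γ) (x - z1) y1 c * decayWeight L (μ + γ) (x - y2 - z2) := by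
        gcongr
        linarith [le_max_left (C * √n ^ δ) (2 * I)]

/-- estimates (5.7) and (5.8): the averaged difference
estimate for `Φ_{μ+γ}` and the uniform `L¹` bound for `U^{L,δ}_{μ+γ}`. -/
theorem stmt18 (n : ℕ) (hn : 1 ≤ n) (Φ : SchwartzMap (PSp n) ℝ)
    (L : ℝ) (hL : (n : ℝ) < L) (δ : ℝ) (hδ0 : 0 < δ) (hδ1 : δ < 1) :
    ∃ C : ℝ, 0 < C ∧
      (∀ (γ μ : ℤ), 0 ≤ μ → ∀ (c : ESp n) (ℓ : ℝ), 0 < ℓ → ∀ y1 ∈ cube n c ℓ,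
        ∀ x z1 y2 z2 : ESp n,
          |dilR (⇑Φ) (μ + γ) (x - y1 - z1, x - y2 - z2) -
              dilR (⇑Φ) (μ + γ) (x - c - z1, x - y2 - z2)| ≤
            C * ((2:ℝ) ^ μ) ^ δ * ((2:ℝ) ^ γ * ℓ) ^ δ * Uk L δ (μ + γ) (x - z1) y1 c *
              (((2:ℝ) ^ (μ + γ)) ^ n *
                (1 + (2:ℝ) ^ (μ + γ) * ‖x - y2 - z2‖) ^ (-L))) ∧
      (∀ (k : ℤ) (y1 c : ESp n), (∫ x : ESp n, Uk L δ k x y1 c) ≤ C) :=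
  stmt18_general n Φ L hL δ hδ0 hδ1
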